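/- arXiv:2503.05004 — 5 statements merged into one kernel-verified Lean document; each statement's English description precedes it below -/
import Mathlib

section
/- Let B ≥ 1, η ∈ [0,1], ρ ≥ 1, and define q_i = 1 - (1 + (B-1)η)/(B·i/2 - (B-1)(ρ + 1 - η)) for each integer i. Then for all integers t, n with 2ρ + 2 ≤ t ≤ n, the product of q_i for i from t+1 to n is at least ((t - 2ρ - 2)/n)^{2(η + (1-η)/B)}. -/
/-!
Writing `e = 2 (η + (1 - η) / B)` and `c = (2 (B - 1) (ρ + 1) + 2) / B`, the factors are
`q i = (i - c) / (i - c + e)`. Since `(1 - 1 / x) ^ e ≤ exp (-e / x) ≤ x / (x + e)` for `x ≥ 1`, each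
factor is at least `((i - c - 1) / (i - c)) ^ e`, and these lower bounds telescope to
`((t - c) / (n - c)) ^ e`. Finally `0 < c < 2ρ + 2` gives `(t - c) / (n - c) ≥ (t - 2ρ - 2) / n`.
-/

open Finset Real

theorem prod_Icc_div_sub_one_eq {K : Type*} [Field K] (f : ℤ → K) {t n : ℤ} (htn : t ≤ n)
    (hf : ∀ i ∈ Icc t n, f i ≠ 0) :
    ∏ i ∈ Icc (t + 1) n, f (i - 1) / f i = f t / f n := by
  induction n, htn using Int.leInduction with
  | base => simp [div_self (hf t (by simp))]
  | succ n htn ih =>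
    have hn : f n ≠ 0 := hf n (by simp only [mem_Icc]; omega)
    rw [← insert_Icc_right_eq_Icc_add_one (by omega), prod_insert (by simp), add_sub_cancel_right,
      ih fun i hi => hf i (by simp only [mem_Icc] at hi ⊢; omega), mul_comm, div_mul_div_cancel₀ hn]

theorem rpow_sub_one_div_le_div_add {x : ℝ} (e : ℝ) (hx : 1 ≤ x) (he : 0 ≤ e) :
    ((x - 1) / x) ^ e ≤ x / (x + e) := by
  have hx0 : 0 < x := by linarith
  calc ((x - 1) / x) ^ e = (1 - 1 / x) ^ e := by rw [sub_div, div_self hx0.ne']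
    _ ≤ exp (-(1 / x)) ^ e := by
        gcongr
        · exact sub_nonneg.2 ((div_le_one hx0).2 hx)
        · linarith [add_one_le_exp (-(1 / x))]
    _ = (exp (e / x))⁻¹ := by rw [← exp_mul, ← exp_neg]; ring_nf
    _ ≤ (1 + e / x)⁻¹ := by
        gcongr
        linarith [add_one_le_exp (e / x)]
    _ = x / (x + e) := by field_simp

theorem rpow_div_le_prod_Icc_div_add {c e : ℝ} {t n : ℤ} (he : 0 ≤ e) (htc : c < t)
    (htn : t ≤ n) :
    (((t : ℝ) - c) / (n - c)) ^ e ≤ ∏ i ∈ Icc (t + 1) n, ((i : ℝ) - c) / (i - c + e) := by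
  have hci : ∀ i ∈ Icc (t + 1) n, c + 1 ≤ (i : ℝ) := fun i hi => by
    have : (t : ℝ) + 1 ≤ i := by exact_mod_cast (mem_Icc.1 hi).1
    linarith
  calc (((t : ℝ) - c) / (n - c)) ^ e
      = ∏ i ∈ Icc (t + 1) n, ((((i - 1 : ℤ) : ℝ) - c) / (i - c)) ^ e := by
        rw [Real.finsetProd_rpow, prod_Icc_div_sub_one_eq (fun i : ℤ => (i : ℝ) - c) htn]
        · intro i hi
          have : (t : ℝ) ≤ i := by exact_mod_cast (mem_Icc.1 hi).1
          linarith
        · intro i hi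
          have := hci i hi
          push_cast
          exact div_nonneg (by linarith) (by linarith)
    _ ≤ ∏ i ∈ Icc (t + 1) n, ((i : ℝ) - c) / (i - c + e) := by
        refine prod_le_prod (fun i hi => ?_) fun i hi => ?_
        · have := hci i hi
          push_cast
          exact rpow_nonneg (div_nonneg (by linarith) (by linarith)) e
        · rw [Int.cast_sub, Int.cast_one, sub_right_comm]
          exact rpow_sub_one_div_le_div_add e (by linarith [hci i hi]) he

theorem stmt_3_general (B η ρ : ℝ) (hB : 1 ≤ B) (hη0 : 0 ≤ η) (hρ : 1 ≤ ρ)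
    (q : ℤ → ℝ)
    (hq : ∀ i : ℤ, q i = 1 - (1 + (B - 1) * η) / (B * i / 2 - (B - 1) * (ρ + 1 - η)))
    (t n : ℤ) (ht : 2 * ρ + 2 ≤ (t : ℝ)) (htn : t ≤ n) :
    (∏ i ∈ Finset.Icc (t + 1) n, q i) ≥
      (((t : ℝ) - 2 * ρ - 2) / (n : ℝ)) ^ (2 * (η + (1 - η) / B)) := by
  have hB0 : 0 < B := by linarith
  set e := 2 * (η + (1 - η) / B)
  set c := (2 * (B - 1) * (ρ + 1) + 2) / B with hc
  have hnum : 1 + (B - 1) * η = B / 2 * e := by simp only [e]; field_simp; ring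
  have he : 0 ≤ e := by nlinarith [mul_nonneg (sub_nonneg.2 hB) hη0]
  have hc0 : 0 < c := div_pos (by nlinarith) hB0
  have hcρ : c < 2 * ρ + 2 := by rw [hc, div_lt_iff₀ hB0]; nlinarith
  have htn' : (t : ℝ) ≤ n := by exact_mod_cast htn
  have hq_eq : ∀ i ∈ Icc (t + 1) n, q i = ((i : ℝ) - c) / ((i : ℝ) - c + e) := fun i hi => by
    have hti : (t : ℝ) + 1 ≤ i := by exact_mod_cast (mem_Icc.1 hi).1
    have hden : B * i / 2 - (B - 1) * (ρ + 1 - η) = B / 2 * ((i : ℝ) - c + e) := by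
      simp only [c, e]; field_simp; ring
    rw [hq, hden, hnum, mul_div_mul_left _ _ (by positivity), one_sub_div (by linarith),
      add_sub_cancel_right]
  rw [ge_iff_le, prod_congr rfl hq_eq]
  refine le_trans (rpow_le_rpow (div_nonneg (by linarith) (by linarith)) ?_ he)
    (rpow_div_le_prod_Icc_div_add he (by linarith) htn)
  exact div_le_div₀ (by linarith) (by linarith) (by linarith) (by linarith)

theorem stmt_3 (B η ρ : ℝ) (hB : 1 ≤ B) (hη0 : 0 ≤ η) (hη1 : η ≤ 1) (hρ : 1 ≤ ρ)
    (q : ℤ → ℝ)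
    (hq : ∀ i : ℤ, q i = 1 - (1 + (B - 1) * η) / (B * i / 2 - (B - 1) * (ρ + 1 - η)))
    (t n : ℤ) (ht : 2 * ρ + 2 ≤ (t : ℝ)) (htn : t ≤ n) :
    (∏ i ∈ Finset.Icc (t + 1) n, q i) ≥
      (((t : ℝ) - 2 * ρ - 2) / (n : ℝ)) ^ (2 * (η + (1 - η) / B)) :=
  stmt_3_general B η ρ hB hη0 hρ q hq t n ht htn
end

section
/- Let G = (V,E,w) be a weighted graph with k vertices, C* ⊆ E a minimum cut with w(C*) > 0 and w(δ(v)) ≥ w(C*) for every vertex v. Let p : E → [0,1] with Σ_{e∈C*}(1-p_e)w(e) ≤ η·w(C*) and Σ_{e∈E∖C*} p_e w(e) ≤ ρ·w(C*), and let B ≥ 1. Define w_B(e) = (1 + (B-1)(1-p_e))·w(e). If k ≥ 2ρ + 2 + 2(1+(B-1)η)/B (so that the bound is meaningful), then 1 - w_B(C*)/w_B(E) ≥ 1 - (1 + (B-1)η)/(B·k/2 - (B-1)(ρ + 1 - η)). -/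
/-!
Write `W = w(C*)` and `N = 1 + (B-1)η`. Boosting multiplies each weight by a factor in `[1, B]`,
so `W ≤ w_B(C*) ≤ N W` by the false-negative bound, while off the cut
`w_B(E ∖ C*) = B w(E ∖ C*) - (B-1) Σ p_e w(e) ≥ B (w(E) - W) - (B-1) ρ W`.
The degree condition and the handshake lemma give `k W ≤ 2 w(E)`, hence
`w_B(E) ≥ w_B(C*) + (D - N) W` with `D` the denominator of the claimed bound, and
`a / (a + (D - N) W) ≤ N / D` whenever `a ≤ N W`.
-/

open Finset

theorem Finset.sum_sum_filter_mem_eq_two_nsmul {V M : Type*} [Fintype V] [DecidableEq V]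
    [AddCommMonoid M] (E : Finset (Sym2 V)) (hE : ∀ e ∈ E, ¬ e.IsDiag) (f : Sym2 V → M) :
    ∑ v, ∑ e ∈ E with v ∈ e, f e = 2 • ∑ e ∈ E, f e := by
  simp_rw [sum_filter]
  rw [sum_comm, smul_sum]
  refine sum_congr rfl fun e he => ?_
  have hends : ({v | v ∈ e} : Finset V) = e.toFinset := by ext; simp
  rw [← sum_filter, sum_const, hends, Sym2.card_toFinset_of_not_isDiag e (hE e he)]

theorem Finset.card_mul_le_two_mul_sum {V : Type*} [Fintype V] [DecidableEq V]
    (E : Finset (Sym2 V)) (hE : ∀ e ∈ E, ¬ e.IsDiag) (w : Sym2 V → ℝ) (c : ℝ)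
    (hdeg : ∀ v, c ≤ ∑ e ∈ E with v ∈ e, w e) :
    Fintype.card V * c ≤ 2 * ∑ e ∈ E, w e :=
  calc Fintype.card V * c = ∑ _v : V, c := by simp
    _ ≤ ∑ v, ∑ e ∈ E with v ∈ e, w e := sum_le_sum fun v _ => hdeg v
    _ = 2 * ∑ e ∈ E, w e := by rw [sum_sum_filter_mem_eq_two_nsmul E hE, two_nsmul, two_mul]

section Boosted

variable {α : Type*} (B : ℝ) (p w : α → ℝ)

def boosted (e : α) : ℝ := (1 + (B - 1) * (1 - p e)) * w e

theorem sum_boosted_eq_add (s : Finset α) :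
    ∑ e ∈ s, boosted B p w e = ∑ e ∈ s, w e + (B - 1) * ∑ e ∈ s, (1 - p e) * w e := by
  rw [mul_sum, ← sum_add_distrib]
  exact sum_congr rfl fun e _ => by unfold boosted; ring

theorem sum_boosted_eq_sub (s : Finset α) :
    ∑ e ∈ s, boosted B p w e = B * ∑ e ∈ s, w e - (B - 1) * ∑ e ∈ s, p e * w e := by
  rw [mul_sum, mul_sum, ← sum_sub_distrib]
  exact sum_congr rfl fun e _ => by unfold boosted; ring

variable {B p w}

theorem le_boosted (hB : 1 ≤ B) {e : α} (hp : p e ≤ 1) (hw : 0 ≤ w e) :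
    w e ≤ boosted B p w e :=
  le_mul_of_one_le_left hw <|
    le_add_of_nonneg_right (mul_nonneg (sub_nonneg.mpr hB) (sub_nonneg.mpr hp))

end Boosted

theorem div_le_div_of_le_mul_of_add_sub_mul_le {a T N D W : ℝ} (ha : 0 < a) (hN : 0 < N)
    (hND : N ≤ D) (haW : a ≤ N * W) (hT : a + (D - N) * W ≤ T) : a / T ≤ N / D := by
  have hW : 0 < W := pos_of_mul_pos_right (ha.trans_le haW) hN.le
  have hT : 0 < T := by nlinarith
  rw [div_le_div_iff₀ hT (hN.trans_le hND)]
  nlinarith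

theorem stmt_5_general {V : Type*} [Fintype V] [DecidableEq V]
    (E : Finset (Sym2 V)) (w : Sym2 V → ℝ)
    (hw : ∀ e ∈ E, 0 ≤ w e)
    (hloopless : ∀ e ∈ E, ¬ e.IsDiag)
    (C : Finset (Sym2 V)) (hC : C ⊆ E)
    (hCpos : 0 < ∑ e ∈ C, w e)
    (hmin : ∀ v : V, (∑ e ∈ E.filter (fun e => v ∈ e), w e) ≥ ∑ e ∈ C, w e)
    (p : Sym2 V → ℝ) (hp1 : ∀ e, p e ≤ 1)
    (η ρ B : ℝ) (hη0 : 0 ≤ η) (hρ : 1 ≤ ρ) (hB : 1 ≤ B)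
    (hfn : (∑ e ∈ C, (1 - p e) * w e) ≤ η * ∑ e ∈ C, w e)
    (hfp : (∑ e ∈ E \ C, p e * w e) ≤ ρ * ∑ e ∈ C, w e)
    (wB : Sym2 V → ℝ) (hwB : ∀ e, wB e = (1 + (B - 1) * (1 - p e)) * w e)
    (hk : (Fintype.card V : ℝ) ≥ 2 * ρ + 2 + 2 * (1 + (B - 1) * η) / B) :
    1 - (∑ e ∈ C, wB e) / (∑ e ∈ E, wB e) ≥
      1 - (1 + (B - 1) * η) /
        (B * (Fintype.card V : ℝ) / 2 - (B - 1) * (ρ + 1 - η)) := by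
  obtain rfl : wB = boosted B p w := funext hwB
  have hB1 : 0 ≤ B - 1 := sub_nonneg.mpr hB
  have hcut_pos : 0 < ∑ e ∈ C, boosted B p w e :=
    hCpos.trans_le (sum_le_sum fun e he => le_boosted hB (hp1 e) (hw e (hC he)))
  have hcut_le : ∑ e ∈ C, boosted B p w e ≤ (1 + (B - 1) * η) * ∑ e ∈ C, w e := by
    rw [sum_boosted_eq_add]
    linarith [mul_le_mul_of_nonneg_left hfn hB1]
  have hdeg := card_mul_le_two_mul_sum E hloopless w _ hmin
  have hsplit : ∑ e ∈ E, boosted B p w e = ∑ e ∈ C, boosted B p w e +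
      (B * (∑ e ∈ E, w e - ∑ e ∈ C, w e) - (B - 1) * ∑ e ∈ E \ C, p e * w e) := by
    rw [← sum_sdiff hC, sum_boosted_eq_sub, sum_sdiff_eq_sub hC]
    ring
  have hN : 0 < 1 + (B - 1) * η := add_pos_of_pos_of_nonneg one_pos (mul_nonneg hB1 hη0)
  have hk_mul : 2 * (1 + (B - 1) * η) ≤ (Fintype.card V - 2 * ρ - 2) * B := by
    rw [← div_le_iff₀ (by linarith)]
    linarith
  suffices h : (∑ e ∈ C, boosted B p w e) / (∑ e ∈ E, boosted B p w e) ≤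
      (1 + (B - 1) * η) / (B * (Fintype.card V : ℝ) / 2 - (B - 1) * (ρ + 1 - η)) by linarith
  refine div_le_div_of_le_mul_of_add_sub_mul_le hcut_pos hN (by nlinarith) hcut_le ?_
  rw [hsplit]
  nlinarith [mul_le_mul_of_nonneg_left hfp hB1]

/-- single-contraction survival probability bound under boosted
weights. -/
theorem stmt_5 {V : Type*} [Fintype V] [DecidableEq V]
    (E : Finset (Sym2 V)) (w : Sym2 V → ℝ)
    (hw : ∀ e ∈ E, 0 ≤ w e)
    (hloopless : ∀ e ∈ E, ¬ e.IsDiag)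
    (C : Finset (Sym2 V)) (hC : C ⊆ E)
    (hCpos : 0 < ∑ e ∈ C, w e)
    (hmin : ∀ v : V, (∑ e ∈ E.filter (fun e => v ∈ e), w e) ≥ ∑ e ∈ C, w e)
    (p : Sym2 V → ℝ) (hp0 : ∀ e, 0 ≤ p e) (hp1 : ∀ e, p e ≤ 1)
    (η ρ B : ℝ) (hη0 : 0 ≤ η) (hη1 : η ≤ 1) (hρ : 1 ≤ ρ) (hB : 1 ≤ B)
    (hfn : (∑ e ∈ C, (1 - p e) * w e) ≤ η * ∑ e ∈ C, w e)
    (hfp : (∑ e ∈ E \ C, p e * w e) ≤ ρ * ∑ e ∈ C, w e)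
    (wB : Sym2 V → ℝ) (hwB : ∀ e, wB e = (1 + (B - 1) * (1 - p e)) * w e)
    (hk : (Fintype.card V : ℝ) ≥ 2 * ρ + 2 + 2 * (1 + (B - 1) * η) / B) :
    1 - (∑ e ∈ C, wB e) / (∑ e ∈ E, wB e) ≥
      1 - (1 + (B - 1) * η) /
        (B * (Fintype.card V : ℝ) / 2 - (B - 1) * (ρ + 1 - η)) :=
  stmt_5_general E w hw hloopless C hC hCpos hmin p hp1 η ρ B hη0 hρ hB hfn hfp wB hwB hk
end

section
/- Let w, w_B be weight functions on a finite edge set E with w_B(e) = (1 + (B-1)(1-p_e))w(e) for p_e ∈ [0,1] and B ≥ 1, and let C* ⊆ E with w(C*) > 0. If Σ_{e∈E∖C*} p_e w(e) ≤ ρ·w(C*) and Σ_{e∈C*}(1-p_e)w(e) = η·w(C*), then w_B(E) ≥ B·w(E) - (B-1)(ρ + 1 - η)·w(C*). -/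
/-!
`w_B(E) = w(E) + (B - 1) ∑_E (1 - p) w`, and splitting the last sum over `C*` and `E ∖ C*` bounds
it below by `w(E) - (ρ + 1 - η) w(C*)`; the factor `B - 1` is nonnegative.
-/

open Finset

theorem sum_mul_one_add_mul_one_sub {α R : Type*} [CommRing R] (s : Finset α) (w p : α → R) (c : R) :
    ∑ e ∈ s, (1 + c * (1 - p e)) * w e = ∑ e ∈ s, w e + c * ∑ e ∈ s, (1 - p e) * w e := by
  rw [mul_sum, ← sum_add_distrib]
  exact sum_congr rfl fun e _ => by ring

theorem sub_le_sum_one_sub_mul {α K : Type*} [Field K] [LinearOrder K] [IsStrictOrderedRing K]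
    [DecidableEq α] {E C : Finset α} (hC : C ⊆ E) {w p : α → K}
    {ρ η : K} (hfp : ∑ e ∈ E \ C, p e * w e ≤ ρ * ∑ e ∈ C, w e)
    (hη : ∑ e ∈ C, (1 - p e) * w e = η * ∑ e ∈ C, w e) :
    ∑ e ∈ E, w e - (ρ + 1 - η) * ∑ e ∈ C, w e ≤ ∑ e ∈ E, (1 - p e) * w e := by
  have hsplit := sum_sdiff hC (f := fun e => (1 - p e) * w e)
  have hsplit_w := sum_sdiff hC (f := w)
  have hcompl : ∑ e ∈ E \ C, (1 - p e) * w e = ∑ e ∈ E \ C, w e - ∑ e ∈ E \ C, p e * w e := by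
    simp only [sub_mul, one_mul, sum_sub_distrib]
  linarith

theorem stmt_7_general {α : Type*} [DecidableEq α] (E : Finset α) (C : Finset α) (hC : C ⊆ E)
    (w : α → ℝ)
    (p : α → ℝ)
    (B η ρ : ℝ) (hB : 1 ≤ B)
    (wB : α → ℝ) (hwB : ∀ e, wB e = (1 + (B - 1) * (1 - p e)) * w e)
    (hfp : (∑ e ∈ E \ C, p e * w e) ≤ ρ * ∑ e ∈ C, w e)
    (hη : (∑ e ∈ C, (1 - p e) * w e) = η * ∑ e ∈ C, w e) :
    (∑ e ∈ E, wB e) ≥ B * (∑ e ∈ E, w e) - (B - 1) * (ρ + 1 - η) * ∑ e ∈ C, w e := by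
  have hsum : ∑ e ∈ E, wB e = ∑ e ∈ E, w e + (B - 1) * ∑ e ∈ E, (1 - p e) * w e := by
    simp only [hwB, sum_mul_one_add_mul_one_sub]
  have hretained := mul_le_mul_of_nonneg_left (sub_le_sum_one_sub_mul hC hfp hη)
    (sub_nonneg.2 hB)
  linarith

theorem stmt_7 {α : Type*} [DecidableEq α] (E : Finset α) (C : Finset α) (hC : C ⊆ E)
    (w : α → ℝ) (hw : ∀ e ∈ E, 0 ≤ w e)
    (p : α → ℝ) (hp0 : ∀ e, 0 ≤ p e) (hp1 : ∀ e, p e ≤ 1)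
    (B η ρ : ℝ) (hB : 1 ≤ B) (hCpos : 0 < ∑ e ∈ C, w e)
    (wB : α → ℝ) (hwB : ∀ e, wB e = (1 + (B - 1) * (1 - p e)) * w e)
    (hfp : (∑ e ∈ E \ C, p e * w e) ≤ ρ * ∑ e ∈ C, w e)
    (hη : (∑ e ∈ C, (1 - p e) * w e) = η * ∑ e ∈ C, w e) :
    (∑ e ∈ E, wB e) ≥ B * (∑ e ∈ E, w e) - (B - 1) * (ρ + 1 - η) * ∑ e ∈ C, w e :=
  stmt_7_general E C hC w p B η ρ hB wB hwB hfp hη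
end

section
/- Let P : ℕ → (0,∞) satisfy 1/P(n) = 1/P(n-1) + (1 - q_n) for all n > t, where q_i = 1 - (1 + (B-1)η)/(B·i/2 - (B-1)(ρ + 1 - η)) with B ≥ 1, η ∈ [0,1], ρ ≥ 1, t ≥ 3ρ + 2, and 1/P(t) = 2H_t - 2 where H_t is the t-th harmonic number. Then 1/P(n) ≤ 2H_t - 2 + (2(1+(B-1)η)/B)·ln((Bn/2 - (B-1)(ρ+1-η))/(Bt/2 - (B-1)(ρ+1-η))). -/
/-!
Writing `f x = B x / 2 - (B - 1)(ρ + 1 - η)` and `c = 1 + (B - 1)η`, the increment of the recurrence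
is `1 - q (n + 1) = c / f (n + 1)`. Since `f (n + 1) - f n = B / 2`, the bound `1 - 1/y ≤ log y`
gives `c / f (n + 1) ≤ (2c / B)(log f (n + 1) - log f n)`, which is the integral comparison in
discrete form; summing these increments from `t` telescopes to the logarithm of `f n / f t`.
-/

open Real

lemma div_le_log_sub_log {h x : ℝ} (hx : 0 < x) (hxh : 0 < x - h) :
    h / x ≤ log x - log (x - h) := by
  have key := one_sub_inv_le_log_of_pos (div_pos hx hxh)
  rw [log_div hx.ne' hxh.ne', inv_div] at key
  calc h / x = 1 - (x - h) / x := by field_simp; ring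
    _ ≤ log x - log (x - h) := key

lemma le_add_sub_of_succ_sub_le {u g : ℕ → ℝ} {t : ℕ}
    (h : ∀ n ≥ t, u (n + 1) - u n ≤ g (n + 1) - g n) (n : ℕ) (hn : t ≤ n) :
    u n ≤ u t + (g n - g t) := by
  have hmono : MonotoneOn (fun n => g n - u n) (Set.Ici t) :=
    monotoneOn_nat_Ici_of_le_succ fun k hk => by linarith [h k hk]
  have := hmono (Set.mem_Ici.2 le_rfl) (Set.mem_Ici.2 hn) hn
  simp only at this
  linarith

lemma div_affine_le_mul_log_sub_log {B a c : ℝ} (hB : 0 < B) (hc : 0 ≤ c) {x : ℝ}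
    (hx : 0 < B * x / 2 - a) :
    c / (B * (x + 1) / 2 - a) ≤
      2 * c / B * (log (B * (x + 1) / 2 - a) - log (B * x / 2 - a)) := by
  have hx1 : 0 < B * (x + 1) / 2 - a := by linarith
  have hshift : B * (x + 1) / 2 - a - B / 2 = B * x / 2 - a := by ring
  have key := div_le_log_sub_log (h := B / 2) hx1 (by rwa [hshift])
  rw [hshift] at key
  calc c / (B * (x + 1) / 2 - a) = 2 * c / B * (B / 2 / (B * (x + 1) / 2 - a)) := by
        field_simp
    _ ≤ _ := mul_le_mul_of_nonneg_left key (by positivity)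

theorem stmt_10_general (B η ρ : ℝ) (hB : 1 ≤ B) (hη0 : 0 ≤ η) (hρ : 1 ≤ ρ)
    (t : ℕ) (ht : 3 * ρ + 2 ≤ (t : ℝ))
    (q : ℕ → ℝ)
    (hq : ∀ i : ℕ, q i = 1 - (1 + (B - 1) * η) / (B * i / 2 - (B - 1) * (ρ + 1 - η)))
    (P : ℕ → ℝ)
    (hrec : ∀ n, t < n → 1 / P n = 1 / P (n - 1) + (1 - q n))
    (hbase : 1 / P t = 2 * (∑ i ∈ Finset.Icc 1 t, (1 : ℝ) / i) - 2) :
    ∀ n : ℕ, t ≤ n →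
      1 / P n ≤ 2 * (∑ i ∈ Finset.Icc 1 t, (1 : ℝ) / i) - 2 +
        (2 * (1 + (B - 1) * η) / B) *
          Real.log ((B * n / 2 - (B - 1) * (ρ + 1 - η)) /
            (B * t / 2 - (B - 1) * (ρ + 1 - η))) := by
  set a := (B - 1) * (ρ + 1 - η)
  set c := 1 + (B - 1) * η
  have hB0 : 0 < B := by linarith
  have hc : 0 ≤ c := by nlinarith
  have hft : 0 < B * t / 2 - a := by nlinarith
  have hf : ∀ n : ℕ, t ≤ n → 0 < B * n / 2 - a := fun n hn => by
    have : (t : ℝ) ≤ n := by exact_mod_cast hn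
    nlinarith
  have hstep : ∀ n ≥ t, 1 / P (n + 1) - 1 / P n ≤
      2 * c / B * log (B * ↑(n + 1) / 2 - a) - 2 * c / B * log (B * n / 2 - a) := by
    intro n hn
    rw [hrec (n + 1) (Nat.lt_succ_of_le hn), Nat.add_sub_cancel, hq, ← mul_sub]
    push_cast
    linarith [div_affine_le_mul_log_sub_log hB0 hc (hf n hn)]
  intro n hn
  rw [← hbase, log_div (hf n hn).ne' hft.ne', mul_sub]
  exact le_add_sub_of_succ_sub_le (u := fun n => 1 / P n)
    (g := fun n : ℕ => 2 * c / B * log (B * n / 2 - a)) hstep n hn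

theorem stmt_10 (B η ρ : ℝ) (hB : 1 ≤ B) (hη0 : 0 ≤ η) (hη1 : η ≤ 1) (hρ : 1 ≤ ρ)
    (t : ℕ) (ht : 3 * ρ + 2 ≤ (t : ℝ))
    (q : ℕ → ℝ)
    (hq : ∀ i : ℕ, q i = 1 - (1 + (B - 1) * η) / (B * i / 2 - (B - 1) * (ρ + 1 - η)))
    (P : ℕ → ℝ) (hPpos : ∀ n, 0 < P n)
    (hrec : ∀ n, t < n → 1 / P n = 1 / P (n - 1) + (1 - q n))
    (hbase : 1 / P t = 2 * (∑ i ∈ Finset.Icc 1 t, (1 : ℝ) / i) - 2) :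
    ∀ n : ℕ, t ≤ n →
      1 / P n ≤ 2 * (∑ i ∈ Finset.Icc 1 t, (1 : ℝ) / i) - 2 +
        (2 * (1 + (B - 1) * η) / B) *
          Real.log ((B * n / 2 - (B - 1) * (ρ + 1 - η)) /
            (B * t / 2 - (B - 1) * (ρ + 1 - η))) :=
  stmt_10_general B η ρ hB hη0 hρ t ht q hq P hrec hbase
end

section
/- Fix an edge set indexed by [N], a vector w* ∈ [0,1]^N, a scalar W > 0, a scalar b ≥ 0, and n ≥ 2. Define U^b(p) = n^{2η(p)}·((b - ⟨w*, p⟩)/W)² where η(p) = ⟨w* restricted-support, (1-p)⟩/W is affine in p (more precisely η(p) = (Σ_i w*_i(1 - p_i))/W). Then U^b is convex on the convex set K_b = {p ∈ [0,1]^N : Σ_i p_i ≤ b}. -/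
/-!
With `z(p) = (b - ⟨w*, p⟩) / W`, the exponent `2η(p)` differs from `2z(p)` by a constant, so
`U^b = C · (n²)^z · z²` with `C > 0`. On `[0, ∞)` the functions `t ↦ (n²)^t` and `t ↦ t²` are
convex, nonnegative and monotone, hence their product is convex (`ConvexOn.mul`). Finally `z` is
affine and nonnegative on `K_b`, since `⟨w*, p⟩ ≤ ∑ pᵢ ≤ b` there.
-/

open Set

lemma convexOn_rpow_mul_pow {B : ℝ} (hB : 1 ≤ B) (m : ℕ) :
    ConvexOn ℝ (Ici 0) fun t : ℝ => B ^ t * t ^ m := by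
  have hexp : MonotoneOn (fun t : ℝ => B ^ t) (Ici 0) :=
    fun _ _ _ _ hst => Real.rpow_le_rpow_of_exponent_le hB hst
  have hpow : MonotoneOn (fun t : ℝ => t ^ m) (Ici 0) :=
    fun _ hs _ _ hst => pow_le_pow_left₀ hs hst m
  exact ((convexOn_rpow_left (by linarith)).subset (subset_univ _) (convex_Ici 0)).mul
    (convexOn_pow m) (fun t _ => Real.rpow_nonneg (by linarith) t)
    (fun _ ht => pow_nonneg ht m) (hexp.monovaryOn hpow)

lemma convex_cube_inter_sum_le {ι : Type*} [Fintype ι] (b : ℝ) :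
    Convex ℝ {p : ι → ℝ | (∀ i, 0 ≤ p i ∧ p i ≤ 1) ∧ ∑ i, p i ≤ b} := by
  have hsum : IsLinearMap ℝ fun p : ι → ℝ => ∑ i, p i :=
    ⟨fun p q => Finset.sum_add_distrib, fun c p => (Finset.mul_sum _ _ _).symm⟩
  have hK : {p : ι → ℝ | (∀ i, 0 ≤ p i ∧ p i ≤ 1) ∧ ∑ i, p i ≤ b}
      = Icc 0 1 ∩ {p | ∑ i, p i ≤ b} := by
    ext p
    simp [Pi.le_def, forall_and]
  rw [hK]
  exact (convex_Icc 0 1).inter (convex_halfSpace_le hsum b)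

lemma sum_mul_le_sum_of_le_one {ι : Type*} [Fintype ι] {w p : ι → ℝ} (hw : ∀ i, w i ≤ 1)
    (hp : ∀ i, 0 ≤ p i) : ∑ i, w i * p i ≤ ∑ i, p i :=
  Finset.sum_le_sum fun i _ => mul_le_of_le_one_left (hp i) (hw i)

noncomputable def normalizedSlack {ι : Type*} [Fintype ι] (w : ι → ℝ) (b W : ℝ) :
    (ι → ℝ) →ᵃ[ℝ] ℝ :=
  AffineMap.const ℝ (ι → ℝ) (b / W) - W⁻¹ • (Fintype.linearCombination ℝ w).toAffineMap

lemma normalizedSlack_apply {ι : Type*} [Fintype ι] (w : ι → ℝ) (b W : ℝ) (p : ι → ℝ) :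
    normalizedSlack w b W p = (b - ∑ i, w i * p i) / W := by
  simp [normalizedSlack, Fintype.linearCombination_apply, mul_comm]
  ring

theorem stmt_15_general (N : ℕ) (wstar : Fin N → ℝ)
    (hw1 : ∀ i, wstar i ≤ 1)
    (W : ℝ) (hW : 0 < W) (b : ℝ) (n : ℕ) (hn : 2 ≤ n) :
    ConvexOn ℝ
      {p : Fin N → ℝ | (∀ i, 0 ≤ p i ∧ p i ≤ 1) ∧ (∑ i, p i) ≤ b}
      (fun p : Fin N → ℝ =>
        (n : ℝ) ^ (2 * ((∑ i, wstar i * (1 - p i)) / W)) *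
          ((b - ∑ i, wstar i * p i) / W) ^ 2) := by
  set z := normalizedSlack wstar b W
  have hn0 : (0 : ℝ) < n := by positivity
  have hB : 1 ≤ (n : ℝ) ^ 2 := one_le_pow₀ (by exact_mod_cast (by omega : 1 ≤ n))
  have hU : ∀ p : Fin N → ℝ, (n : ℝ) ^ (2 * ((∑ i, wstar i * (1 - p i)) / W)) *
      ((b - ∑ i, wstar i * p i) / W) ^ 2
      = (n : ℝ) ^ (2 * ((∑ i, wstar i - b) / W)) * (((n : ℝ) ^ 2) ^ z p * z p ^ 2) := by
    intro p
    have hexp : 2 * ((∑ i, wstar i * (1 - p i)) / W)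
        = 2 * ((∑ i, wstar i - b) / W) + 2 * z p := by
      simp only [z, normalizedSlack_apply, mul_sub, mul_one, Finset.sum_sub_distrib]
      ring
    rw [hexp, Real.rpow_add hn0, Real.rpow_mul hn0.le 2 (z p), Real.rpow_two,
      normalizedSlack_apply, mul_assoc]
  have hz : {p : Fin N → ℝ | (∀ i, 0 ≤ p i ∧ p i ≤ 1) ∧ (∑ i, p i) ≤ b} ⊆ z ⁻¹' Ici 0 := by
    intro p hp
    rw [mem_preimage, mem_Ici, normalizedSlack_apply]
    have hwp := sum_mul_le_sum_of_le_one hw1 fun i => (hp.1 i).1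
    exact div_nonneg (by linarith [hp.2]) hW.le
  simp_rw [hU]
  exact (((convexOn_rpow_mul_pow hB 2).comp_affineMap z).smul (Real.rpow_nonneg hn0.le _)).subset
    hz (convex_cube_inter_sum_le b)

/-- the surrogate objective `U^b` is convex on `K_b`. -/
theorem stmt_15 (N : ℕ) (wstar : Fin N → ℝ)
    (hw0 : ∀ i, 0 ≤ wstar i) (hw1 : ∀ i, wstar i ≤ 1)
    (W : ℝ) (hW : 0 < W) (b : ℝ) (hb : 0 ≤ b) (n : ℕ) (hn : 2 ≤ n) :
    ConvexOn ℝ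
      {p : Fin N → ℝ | (∀ i, 0 ≤ p i ∧ p i ≤ 1) ∧ (∑ i, p i) ≤ b}
      (fun p : Fin N → ℝ =>
        (n : ℝ) ^ (2 * ((∑ i, wstar i * (1 - p i)) / W)) *
          ((b - ∑ i, wstar i * p i) / W) ^ 2) :=
  stmt_15_general N wstar hw1 W hW b n hn
end
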